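/- Let 0 < p ≤ q and let α ∈ (0, min(p, 1)). Then the elliptical spiral S_{p,q} is an α-Hölder arc: there exist a homeomorphism f from [0,1] onto S_{p,q} and H > 0 with |f(x) − f(y)| ≤ H|x − y|^α for all x, y ∈ [0,1]. -/

import Mathlib

/-- The parametrizing map `t ↦ t^{-p} cos t + i t^{-q} sin t` of the elliptical
spiral `S_{p,q}`. -/
noncomputable def ellipticalMap (p q : ℝ) : ℝ → ℂ :=
  fun t => (↑(t ^ (-p) * Real.cos t) : ℂ) + (↑(t ^ (-q) * Real.sin t) : ℂ) * Complex.I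

/-- The elliptical spiral `S_{p,q} = {t^{-p} cos t + i t^{-q} sin t : t ∈ [2π, ∞)} ∪ {0}`. -/
noncomputable def ellipticalSpiral (p q : ℝ) : Set ℂ :=
  ellipticalMap p q '' Set.Ici (2 * Real.pi) ∪ {0}

/-- `S` is an `α`-Hölder arc: there is a homeomorphism `f` from `[0,1]` onto `S`
(equivalently, a continuous injective surjection from the compact set `[0,1]`)
and `H > 0` with `|f x - f y| ≤ H |x - y| ^ α`. -/
def IsHolderArc (S : Set ℂ) (α : ℝ) : Prop :=
  ∃ f : ℝ → ℂ, Set.InjOn f (Set.Icc 0 1) ∧ f '' Set.Icc 0 1 = S ∧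
    ∃ H > 0, ∀ x ∈ Set.Icc (0:ℝ) 1, ∀ y ∈ Set.Icc (0:ℝ) 1,
      ‖f x - f y‖ ≤ H * |x - y| ^ α

/-!
Reparametrize the spiral by `t = 2π x^(-s)` with `s = α / (p - α)`, so that `m = s + 1`
satisfies `p s = m α`. The decay `|γ(t)| ≲ t^(-p)`, `|γ'(t)| ≲ t^(-p)` of the parametrization
`γ = ellipticalMap p q` turns into `|f(x)| ≲ x^(m α)` and `|f'(x)| ≲ x^(m (α - 1))` for the
arc `f(x) = γ(2π x^(-s))`. Such an `f` is `α`-Hölder on `[0, 1]`: for `y < x` with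
`d = x - y`, if `y^m ≤ d` then `x ≤ 2 d^(1/m)` and the size bound suffices, while otherwise
the mean value theorem on `[y, x]` gives `|f x - f y| ≲ y^(m (α - 1)) d ≤ d^α`.
Injectivity comes from `(t^p Re γ(t))² + (t^q Im γ(t))² = 1`, whose left side is strictly
increasing in `t` for a fixed nonzero point.
-/

open Real Set

section HolderCriterion

variable {E : Type*} [NormedAddCommGroup E] [NormedSpace ℝ E]

theorem norm_sub_le_rpow_of_norm_le_of_norm_deriv_le {f f' : ℝ → E} {A B m α : ℝ}
    (hm : 1 ≤ m) (hα0 : 0 ≤ α) (hα1 : α ≤ 1)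
    (hf : ∀ x ∈ Icc (0 : ℝ) 1, ‖f x‖ ≤ A * x ^ (m * α))
    (hf' : ∀ x ∈ Ioc (0 : ℝ) 1, HasDerivAt f (f' x) x)
    (hf'_le : ∀ x ∈ Ioc (0 : ℝ) 1, ‖f' x‖ ≤ B * x ^ (m * (α - 1))) :
    ∀ x ∈ Icc (0 : ℝ) 1, ∀ y ∈ Icc (0 : ℝ) 1,
      ‖f x - f y‖ ≤ (2 * 2 ^ (m * α) * A + B) * |x - y| ^ α := by
  have hA : 0 ≤ A := by simpa using (norm_nonneg _).trans (hf 1 ⟨zero_le_one, le_rfl⟩)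
  have hB : 0 ≤ B := by simpa using (norm_nonneg _).trans (hf'_le 1 ⟨zero_lt_one, le_rfl⟩)
  intro x hx y hy
  wlog hyx : y ≤ x generalizing x y
  · rw [norm_sub_rev, abs_sub_comm]
    exact this y hy x hx (le_of_not_ge hyx)
  obtain rfl | hyx := hyx.eq_or_lt
  · simp only [sub_self, norm_zero, abs_zero]
    exact mul_nonneg (by positivity) (rpow_nonneg le_rfl _)
  set d := x - y
  have hd : 0 < d := sub_pos.2 hyx
  rw [abs_of_pos hd]
  rcases le_or_gt (y ^ m) d with hfar | hnear
  · have hy_le : y ≤ d ^ m⁻¹ := by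
      calc y = (y ^ m) ^ m⁻¹ := (rpow_rpow_inv hy.1 (by linarith)).symm
        _ ≤ d ^ m⁻¹ := by gcongr; exact rpow_nonneg hy.1 _
    have hd_le : d ≤ d ^ m⁻¹ := by
      simpa using rpow_le_rpow_of_exponent_ge hd (by linarith [hx.2, hy.1])
        (inv_le_one_of_one_le₀ hm)
    have hx_le : x ^ (m * α) ≤ 2 ^ (m * α) * d ^ α := by
      calc x ^ (m * α) ≤ (2 * d ^ m⁻¹) ^ (m * α) :=
            rpow_le_rpow hx.1 (by linarith) (mul_nonneg (by linarith) hα0)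
        _ = 2 ^ (m * α) * d ^ α := by
          rw [mul_rpow zero_le_two (rpow_nonneg hd.le _), ← rpow_mul hd.le,
            inv_mul_cancel_left₀ (by linarith)]
    calc ‖f x - f y‖ ≤ ‖f x‖ + ‖f y‖ := norm_sub_le _ _
      _ ≤ A * x ^ (m * α) + A * x ^ (m * α) := by
          gcongr
          · exact hf x hx
          · exact (hf y hy).trans (by gcongr; exact hy.1)
      _ ≤ 2 * 2 ^ (m * α) * A * d ^ α := by nlinarith
      _ ≤ (2 * 2 ^ (m * α) * A + B) * d ^ α := by gcongr; linarith
  · have hy0 : 0 < y := by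
      by_contra! h
      rw [le_antisymm h hy.1, zero_rpow (by linarith)] at hnear
      linarith
    have hmvt := norm_image_sub_le_of_norm_deriv_le_segment' (C := B * y ^ (m * (α - 1)))
      (fun z hz => (hf' z ⟨hy0.trans_le hz.1, hz.2.trans hx.2⟩).hasDerivWithinAt)
      (fun z hz => (hf'_le z ⟨hy0.trans_le hz.1, hz.2.le.trans hx.2⟩).trans <|
        mul_le_mul_of_nonneg_left (rpow_le_rpow_of_nonpos hy0 hz.1 (by nlinarith)) hB)
      x ⟨hyx.le, le_rfl⟩
    have hym : 0 < y ^ m := rpow_pos_of_pos hy0 _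
    calc ‖f x - f y‖ ≤ B * y ^ (m * (α - 1)) * d := hmvt
      _ = B * (y ^ m) ^ (α - 1) * (d ^ α * d ^ (1 - α)) := by
          rw [← rpow_add hd, add_sub_cancel, rpow_one, rpow_mul hy0.le]
      _ = B * d ^ α * (d ^ (1 - α) * (y ^ m) ^ (α - 1)) := by ring
      _ ≤ B * d ^ α * ((y ^ m) ^ (1 - α) * (y ^ m) ^ (α - 1)) := by gcongr
      _ = B * d ^ α := by rw [← rpow_add hym]; simp
      _ ≤ (2 * 2 ^ (m * α) * A + B) * d ^ α := by
          gcongr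
          exact le_add_of_nonneg_left (by positivity)

end HolderCriterion

variable {p q t u : ℝ}

theorem norm_ofReal_add_ofReal_mul_I_le (a b : ℝ) :
    ‖(a : ℂ) + b * Complex.I‖ ≤ |a| + |b| := by
  simpa using Complex.norm_le_abs_re_add_abs_im (a + b * Complex.I)

theorem abs_rpow_mul_le {r a : ℝ} (ht : 0 ≤ t) (ha : |a| ≤ 1) : |t ^ r * a| ≤ t ^ r := by
  rw [abs_mul, abs_of_nonneg (rpow_nonneg ht r)]
  exact mul_le_of_le_one_right (rpow_nonneg ht r) ha

theorem abs_neg_mul_rpow_mul_add_rpow_mul_le {r a b : ℝ} (hr : 0 ≤ r) (ht : 1 ≤ t)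
    (ha : |a| ≤ 1) (hb : |b| ≤ 1) :
    |-r * t ^ (-r - 1) * a + t ^ (-r) * b| ≤ (1 + r) * t ^ (-r) := by
  have ht0 : 0 ≤ t := zero_le_one.trans ht
  have hrt : t ^ (-r - 1) ≤ t ^ (-r) := rpow_le_rpow_of_exponent_le ht (by linarith)
  calc |-r * t ^ (-r - 1) * a + t ^ (-r) * b|
      ≤ r * |t ^ (-r - 1) * a| + |t ^ (-r) * b| := by
        refine (abs_add_le _ _).trans ?_
        rw [mul_assoc, abs_mul, abs_neg, abs_of_nonneg hr]
    _ ≤ r * t ^ (-r) + t ^ (-r) := by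
        gcongr
        · exact (abs_rpow_mul_le ht0 ha).trans hrt
        · exact abs_rpow_mul_le ht0 hb
    _ = (1 + r) * t ^ (-r) := by ring

theorem image_mul_rpow_neg_Icc {c s : ℝ} (hc : 0 < c) (hs : 0 < s) :
    (fun x : ℝ => c * x ^ (-s)) '' Icc 0 1 = insert 0 (Ici c) := by
  ext t
  constructor
  · rintro ⟨x, ⟨hx0, hx1⟩, rfl⟩
    obtain rfl | hx0 := hx0.eq_or_lt
    · simp [zero_rpow (neg_ne_zero.2 hs.ne')]
    · exact Or.inr (le_mul_of_one_le_right hc.le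
        (one_le_rpow_of_pos_of_le_one_of_nonpos hx0 hx1 (by linarith)))
  · rintro (rfl | ht)
    · exact ⟨0, left_mem_Icc.2 zero_le_one, by simp [zero_rpow (neg_ne_zero.2 hs.ne')]⟩
    · have ht0 : 0 < t := hc.trans_le ht
      have hct : 0 < c / t := div_pos hc ht0
      refine ⟨(c / t) ^ s⁻¹, ⟨by positivity, rpow_le_one hct.le ((div_le_one ht0).2 ht)
        (inv_nonneg.2 hs.le)⟩, ?_⟩
      dsimp only
      rw [← rpow_mul hct.le, show s⁻¹ * -s = -1 by field_simp, rpow_neg_one, inv_div,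
        mul_div_cancel₀ _ hc.ne']

@[simp]
theorem ellipticalMap_re (p q t : ℝ) : (ellipticalMap p q t).re = t ^ (-p) * cos t := by
  simp [ellipticalMap, Complex.cos_ofReal_re]

@[simp]
theorem ellipticalMap_im (p q t : ℝ) : (ellipticalMap p q t).im = t ^ (-q) * sin t := by
  simp [ellipticalMap, Complex.sin_ofReal_re]

theorem ellipticalMap_zero (hp : p ≠ 0) (hq : q ≠ 0) : ellipticalMap p q 0 = 0 := by
  apply Complex.ext <;> simp [zero_rpow, hp, hq]

theorem sq_rpow_mul_ellipticalMap_re_add_sq_rpow_mul_ellipticalMap_im (ht : 0 < t) :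
    (t ^ p * (ellipticalMap p q t).re) ^ 2 + (t ^ q * (ellipticalMap p q t).im) ^ 2 = 1 := by
  simp only [ellipticalMap_re, ellipticalMap_im, ← mul_assoc, ← rpow_add ht, add_neg_cancel,
    rpow_zero, one_mul, cos_sq_add_sin_sq]

theorem ellipticalMap_ne_zero (ht : 0 < t) : ellipticalMap p q t ≠ 0 := by
  intro h
  simpa [h] using
    sq_rpow_mul_ellipticalMap_re_add_sq_rpow_mul_ellipticalMap_im (p := p) (q := q) ht

theorem ellipticalMap_ne_of_lt (hp : 0 < p) (hq : 0 < q) (ht : 0 < t) (htu : t < u) :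
    ellipticalMap p q t ≠ ellipticalMap p q u := by
  intro h
  have hu := sq_rpow_mul_ellipticalMap_re_add_sq_rpow_mul_ellipticalMap_im (p := p) (q := q)
    (ht.trans htu)
  have ht' := sq_rpow_mul_ellipticalMap_re_add_sq_rpow_mul_ellipticalMap_im (p := p) (q := q) ht
  rw [← h] at hu
  set a := (ellipticalMap p q t).re
  set b := (ellipticalMap p q t).im
  have hP : 0 < (u ^ p) ^ 2 - (t ^ p) ^ 2 := by
    have := rpow_lt_rpow ht.le htu hp; nlinarith [rpow_pos_of_pos ht p]
  have hQ : 0 < (u ^ q) ^ 2 - (t ^ q) ^ 2 := by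
    have := rpow_lt_rpow ht.le htu hq; nlinarith [rpow_pos_of_pos ht q]
  have hsum : ((u ^ p) ^ 2 - (t ^ p) ^ 2) * a ^ 2 + ((u ^ q) ^ 2 - (t ^ q) ^ 2) * b ^ 2 = 0 := by
    linear_combination hu - ht'
  have ha : ((u ^ p) ^ 2 - (t ^ p) ^ 2) * a ^ 2 = 0 := by
    nlinarith [mul_nonneg hP.le (sq_nonneg a), mul_nonneg hQ.le (sq_nonneg b)]
  have hb : ((u ^ q) ^ 2 - (t ^ q) ^ 2) * b ^ 2 = 0 := by linarith
  simp only [mul_eq_zero, hP.ne', hQ.ne', false_or, pow_eq_zero_iff two_ne_zero] at ha hb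
  simp [ha, hb] at ht'

theorem ellipticalMap_injOn (hp : 0 < p) (hq : 0 < q) : InjOn (ellipticalMap p q) (Ici 0) := by
  have hne : ∀ t ∈ Ici (0 : ℝ), ∀ u, t < u →
      ellipticalMap p q t ≠ ellipticalMap p q u := by
    intro t ht u htu
    obtain rfl | ht := (mem_Ici.1 ht).eq_or_lt
    · rw [ellipticalMap_zero hp.ne' hq.ne']
      exact (ellipticalMap_ne_zero htu).symm
    · exact ellipticalMap_ne_of_lt hp hq ht htu
  intro t ht u hu h
  by_contra htu
  rcases lt_or_gt_of_ne htu with htu | hut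
  · exact hne t ht u htu h
  · exact hne u hu t hut h.symm

theorem norm_ellipticalMap_le (hpq : p ≤ q) (ht : 1 ≤ t) :
    ‖ellipticalMap p q t‖ ≤ 2 * t ^ (-p) := by
  have ht0 : 0 ≤ t := zero_le_one.trans ht
  calc ‖ellipticalMap p q t‖ ≤ |t ^ (-p) * cos t| + |t ^ (-q) * sin t| :=
        norm_ofReal_add_ofReal_mul_I_le _ _
    _ ≤ t ^ (-p) + t ^ (-q) :=
        add_le_add (abs_rpow_mul_le ht0 (abs_cos_le_one t))
          (abs_rpow_mul_le ht0 (abs_sin_le_one t))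
    _ ≤ 2 * t ^ (-p) := by
        linarith [rpow_le_rpow_of_exponent_le ht (neg_le_neg hpq)]

noncomputable def ellipticalMapDeriv (p q t : ℝ) : ℂ :=
  (↑(-p * t ^ (-p - 1) * cos t + t ^ (-p) * -sin t) : ℂ) +
    (↑(-q * t ^ (-q - 1) * sin t + t ^ (-q) * cos t) : ℂ) * Complex.I

theorem hasDerivAt_ellipticalMap (ht : 0 < t) :
    HasDerivAt (ellipticalMap p q) (ellipticalMapDeriv p q t) t :=
  ((hasDerivAt_rpow_const (Or.inl ht.ne')).mul (hasDerivAt_cos t)).ofReal_comp.add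
    (((hasDerivAt_rpow_const (Or.inl ht.ne')).mul (hasDerivAt_sin t)).ofReal_comp.mul_const _)

theorem norm_ellipticalMapDeriv_le (hp : 0 ≤ p) (hpq : p ≤ q) (ht : 1 ≤ t) :
    ‖ellipticalMapDeriv p q t‖ ≤ (2 + p + q) * t ^ (-p) := by
  have hneg : |-sin t| ≤ 1 := by rw [abs_neg]; exact abs_sin_le_one t
  calc ‖ellipticalMapDeriv p q t‖
      ≤ |-p * t ^ (-p - 1) * cos t + t ^ (-p) * -sin t| +
          |-q * t ^ (-q - 1) * sin t + t ^ (-q) * cos t| :=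
        norm_ofReal_add_ofReal_mul_I_le _ _
    _ ≤ (1 + p) * t ^ (-p) + (1 + q) * t ^ (-q) :=
        add_le_add (abs_neg_mul_rpow_mul_add_rpow_mul_le hp ht (abs_cos_le_one t) hneg)
          (abs_neg_mul_rpow_mul_add_rpow_mul_le (hp.trans hpq) ht (abs_sin_le_one t)
            (abs_cos_le_one t))
    _ ≤ (1 + p) * t ^ (-p) + (1 + q) * t ^ (-p) := by
        gcongr (1 + p) * t ^ (-p) + (1 + q) * ?_
        · linarith
        · exact rpow_le_rpow_of_exponent_le ht (neg_le_neg hpq)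
    _ = (2 + p + q) * t ^ (-p) := by ring

/-- The junk value `0 ^ (-s) = 0` makes `ellipticalArc p q s 0 = ellipticalMap p q 0 = 0`,
the endpoint of the spiral. -/
noncomputable def ellipticalArc (p q s x : ℝ) : ℂ :=
  ellipticalMap p q (2 * π * x ^ (-s))

variable {s x : ℝ}

theorem ellipticalArc_injOn (hp : 0 < p) (hq : 0 < q) (hs : 0 < s) :
    InjOn (ellipticalArc p q s) (Icc 0 1) := by
  have hτ : InjOn (fun x : ℝ => 2 * π * x ^ (-s)) (Icc 0 1) := fun x hx y hy h =>
    rpow_left_injOn (neg_ne_zero.2 hs.ne') hx.1 hy.1 (mul_left_cancel₀ two_pi_pos.ne' h)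
  exact (ellipticalMap_injOn hp hq).comp hτ fun x hx =>
    mul_nonneg two_pi_pos.le (rpow_nonneg hx.1 _)

theorem image_ellipticalArc (hp : p ≠ 0) (hq : q ≠ 0) (hs : 0 < s) :
    ellipticalArc p q s '' Icc 0 1 = ellipticalSpiral p q := by
  rw [show ellipticalArc p q s = ellipticalMap p q ∘ fun x => 2 * π * x ^ (-s) from rfl,
    image_comp, image_mul_rpow_neg_Icc two_pi_pos hs, image_insert_eq, ellipticalMap_zero hp hq,
    ellipticalSpiral, union_singleton]

theorem mul_rpow_neg_rpow_neg {c : ℝ} (hc : 0 ≤ c) (hx : 0 ≤ x) :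
    (c * x ^ (-s)) ^ (-p) = c ^ (-p) * x ^ (p * s) := by
  rw [mul_rpow hc (rpow_nonneg hx _), ← rpow_mul hx, neg_mul_neg, mul_comm s]

theorem one_le_two_pi_mul_rpow_neg (hs : 0 ≤ s) (hx : x ∈ Ioc 0 1) :
    1 ≤ 2 * π * x ^ (-s) := by
  have := one_le_rpow_of_pos_of_le_one_of_nonpos hx.1 hx.2 (neg_nonpos.2 hs)
  nlinarith [two_le_pi]

theorem norm_ellipticalArc_le (hp : 0 < p) (hpq : p ≤ q) (hs : 0 < s) (hx : x ∈ Icc 0 1) :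
    ‖ellipticalArc p q s x‖ ≤ 2 * (2 * π) ^ (-p) * x ^ (p * s) := by
  obtain rfl | hx0 := hx.1.eq_or_lt
  · rw [ellipticalArc, zero_rpow (neg_ne_zero.2 hs.ne'), mul_zero,
      ellipticalMap_zero hp.ne' (hp.trans_le hpq).ne', norm_zero]
    positivity
  · calc ‖ellipticalArc p q s x‖ ≤ 2 * (2 * π * x ^ (-s)) ^ (-p) :=
          norm_ellipticalMap_le hpq (one_le_two_pi_mul_rpow_neg hs.le ⟨hx0, hx.2⟩)
      _ = 2 * (2 * π) ^ (-p) * x ^ (p * s) := by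
          rw [mul_rpow_neg_rpow_neg two_pi_pos.le hx.1, mul_assoc]

theorem hasDerivAt_ellipticalArc (hx : 0 < x) :
    HasDerivAt (ellipticalArc p q s)
      ((2 * π * (-s * x ^ (-s - 1))) • ellipticalMapDeriv p q (2 * π * x ^ (-s))) x :=
  (hasDerivAt_ellipticalMap (by positivity)).scomp x
    ((hasDerivAt_rpow_const (Or.inl hx.ne')).const_mul (2 * π))

theorem norm_deriv_ellipticalArc_le (hp : 0 < p) (hpq : p ≤ q) (hs : 0 < s)
    (hx : x ∈ Ioc 0 1) :
    ‖(2 * π * (-s * x ^ (-s - 1))) • ellipticalMapDeriv p q (2 * π * x ^ (-s))‖ ≤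
      2 * π * s * (2 + p + q) * (2 * π) ^ (-p) * x ^ (p * s - s - 1) := by
  have hcoeff : ‖2 * π * (-s * x ^ (-s - 1))‖ = 2 * π * s * x ^ (-s - 1) := by
    rw [Real.norm_eq_abs, abs_of_nonpos (mul_nonpos_of_nonneg_of_nonpos two_pi_pos.le
      (mul_nonpos_of_nonpos_of_nonneg (neg_nonpos.2 hs.le) (rpow_nonneg hx.1.le _)))]
    ring
  calc ‖(2 * π * (-s * x ^ (-s - 1))) • ellipticalMapDeriv p q (2 * π * x ^ (-s))‖
      ≤ 2 * π * s * x ^ (-s - 1) * ((2 + p + q) * (2 * π * x ^ (-s)) ^ (-p)) := by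
        rw [norm_smul, hcoeff]
        exact mul_le_mul_of_nonneg_left
          (norm_ellipticalMapDeriv_le hp.le hpq (one_le_two_pi_mul_rpow_neg hs.le hx))
          (mul_nonneg (by positivity) (rpow_nonneg hx.1.le _))
    _ = 2 * π * s * (2 + p + q) * (2 * π) ^ (-p) * x ^ (p * s - s - 1) := by
        rw [mul_rpow_neg_rpow_neg two_pi_pos.le hx.1.le,
          show p * s - s - 1 = p * s + (-s - 1) by ring, rpow_add hx.1]
        ring

/-- For `0 < p ≤ q` and `0 < α < min(p, 1)`, the elliptical spiral `S_{p,q}` is an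
`α`-Hölder arc. -/
theorem ellipticalSpiral_isHolderArc (p q α : ℝ) (hp : 0 < p) (hpq : p ≤ q)
    (hα0 : 0 < α) (hα1 : α < min p 1) :
    IsHolderArc (ellipticalSpiral p q) α := by
  obtain ⟨hαp, hα1⟩ := lt_min_iff.1 hα1
  have hq : 0 < q := hp.trans_le hpq
  set s := α / (p - α)
  have hs : 0 < s := div_pos hα0 (sub_pos.2 hαp)
  have hps : p * s = (s + 1) * α := by
    simp only [s]
    field_simp [(sub_pos.2 hαp).ne']
    ring
  have hexp : p * s - s - 1 = (s + 1) * (α - 1) := by linear_combination hps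
  refine ⟨ellipticalArc p q s, ellipticalArc_injOn hp hq hs,
    image_ellipticalArc hp.ne' hq.ne' hs, _, by positivity,
    norm_sub_le_rpow_of_norm_le_of_norm_deriv_le (by linarith) hα0.le hα1.le
      (fun x hx => hps ▸ norm_ellipticalArc_le hp hpq hs hx)
      (fun x hx => hasDerivAt_ellipticalArc hx.1)
      (fun x hx => hexp ▸ norm_deriv_ellipticalArc_le hp hpq hs hx)⟩
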